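/- arXiv:2603.07255 — 2 statements merged into one kernel-verified Lean document; each statement's English description precedes it below -/
import Mathlib

section
/- Suppose the family of conditional densities p_x (w.r.t. a σ-finite measure ν on ℝ^m) is differentiable in quadratic mean at x0 with score ℓ̇ satisfying ∫‖ℓ̇(y)‖^2 p_{x0}(y) ν(dy) < ∞. Define D(x) := ∫(√(p_x(y)) - √(p_{x0}(y)))^2 ν(dy) and I(x0) := ∫ ℓ̇(y) ℓ̇(y)^T p_{x0}(y) ν(dy). Then as x → x0, D(x) = (1/4)(x - x0)^T I(x0)(x - x0) + o(‖x - x0‖^2). -/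
/-! In `L²(ν)` put `u_t = √p_{x0+t} - √p_{x0}` and `s_t = ½ ⟨t, ℓ̇⟩ √p_{x0}`, so that
`D(x0 + t) = ‖u_t‖²` and `¼ tᵀ I(x0) t = ‖s_t‖²`. Quadratic mean differentiability says
`‖u_t - s_t‖ = o(‖t‖)`, Cauchy–Schwarz gives `‖s_t‖ = O(‖t‖)`, and the elementary bound
`|‖u‖² - ‖s‖²| ≤ ‖u - s‖ (‖u - s‖ + 2 ‖s‖)` turns these into `‖u_t‖² - ‖s_t‖² = o(‖t‖²)`. -/

open MeasureTheory Asymptotics Filter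

section Norm

variable {ι E : Type*} [SeminormedAddCommGroup E] {l : Filter ι}

theorem abs_norm_sq_sub_norm_sq_le (u s : E) :
    |‖u‖ ^ 2 - ‖s‖ ^ 2| ≤ ‖u - s‖ * (‖u - s‖ + 2 * ‖s‖) := by
  have hdiff : |‖u‖ - ‖s‖| ≤ ‖u - s‖ := abs_norm_sub_norm_le u s
  have hsum : ‖u‖ + ‖s‖ ≤ ‖u - s‖ + 2 * ‖s‖ := by
    linarith [norm_le_norm_sub_add u s]
  calc |‖u‖ ^ 2 - ‖s‖ ^ 2| = |‖u‖ - ‖s‖| * (‖u‖ + ‖s‖) := by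
        rw [sq_sub_sq, abs_mul, mul_comm,
          abs_of_nonneg (add_nonneg (norm_nonneg u) (norm_nonneg s))]
    _ ≤ ‖u - s‖ * (‖u - s‖ + 2 * ‖s‖) := by gcongr

theorem isLittleO_norm_sq_sub_norm_sq {U S : ι → E} {g : ι → ℝ}
    (hUS : (fun i => U i - S i) =o[l] g) (hS : S =O[l] g) :
    (fun i => ‖U i‖ ^ 2 - ‖S i‖ ^ 2) =o[l] fun i => g i ^ 2 := by
  have hbound : (fun i => ‖U i - S i‖ * (‖U i - S i‖ + 2 * ‖S i‖)) =o[l] fun i => g i * g i :=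
    hUS.norm_left.mul_isBigO (hUS.isBigO.norm_left.add (hS.norm_left.const_mul_left 2))
  refine (isBigO_of_le l fun i => ?_).trans_isLittleO (by simpa only [sq] using hbound)
  rw [Real.norm_eq_abs, Real.norm_of_nonneg (by positivity)]
  exact abs_norm_sq_sub_norm_sq_le _ _

end Norm

namespace MeasureTheory

variable {α : Type*} [MeasurableSpace α] {μ : Measure α}

theorem MemLp.norm_toLp_sq_eq_integral_sq {f : α → ℝ} (hf : MemLp f 2 μ) :
    ‖hf.toLp f‖ ^ 2 = ∫ a, f a ^ 2 ∂μ := by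
  rw [← real_inner_self_eq_norm_sq, L2.inner_def]
  refine integral_congr_ae (hf.coeFn_toLp.mono fun a ha => ?_)
  simp [ha, sq]

theorem Integrable.memLp_two_sqrt {f : α → ℝ} (hf0 : ∀ a, 0 ≤ f a) (hf : Integrable f μ) :
    MemLp (fun a => √(f a)) 2 μ := by
  refine (memLp_two_iff_integrable_sq hf.aemeasurable.sqrt.aestronglyMeasurable).2 ?_
  simpa only [Real.sq_sqrt (hf0 _)] using hf

theorem isLittleO_integral_sq_sub_integral_sq {ι : Type*} {l : Filter ι} {u s : ι → α → ℝ}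
    {g : ι → ℝ}
    (hu : ∀ i, MemLp (u i) 2 μ) (hs : ∀ i, MemLp (s i) 2 μ)
    (hus : (fun i => ∫ a, (u i a - s i a) ^ 2 ∂μ) =o[l] fun i => g i ^ 2)
    (hsg : (fun i => ∫ a, s i a ^ 2 ∂μ) =O[l] fun i => g i ^ 2) :
    (fun i => ∫ a, u i a ^ 2 ∂μ - ∫ a, s i a ^ 2 ∂μ) =o[l] fun i => g i ^ 2 := by
  have hUS : (fun i => (hu i).toLp - (hs i).toLp) =o[l] g := by
    refine isLittleO_norm_left.1 (IsLittleO.of_pow (n := 2) ?_ two_ne_zero)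
    simp only [Pi.pow_def, ← MemLp.toLp_sub, MemLp.norm_toLp_sq_eq_integral_sq]
    exact hus
  have hS : (fun i => (hs i).toLp) =O[l] g := by
    refine isBigO_norm_left.1 (IsBigO.of_pow (n := 2) two_ne_zero ?_)
    simpa only [Pi.pow_def, MemLp.norm_toLp_sq_eq_integral_sq] using hsg
  simpa only [MemLp.norm_toLp_sq_eq_integral_sq] using isLittleO_norm_sq_sub_norm_sq hUS hS

end MeasureTheory

section Score

variable {α E : Type*} [MeasurableSpace α] {μ : Measure α}
  [NormedAddCommGroup E] [InnerProductSpace ℝ E] {L : α → E} {w : α → ℝ}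

theorem sq_half_inner_mul_sqrt (t v : E) {r : ℝ} (hr : 0 ≤ r) :
    (1 / 2 * inner ℝ t v * √r) ^ 2 = 1 / 4 * (inner ℝ t v ^ 2 * r) := by
  rw [mul_pow, mul_pow, Real.sq_sqrt hr]
  ring

theorem real_inner_sq_le_norm_sq_mul_norm_sq (t v : E) :
    inner ℝ t v ^ 2 ≤ ‖t‖ ^ 2 * ‖v‖ ^ 2 := by
  rw [← mul_pow, ← sq_abs]
  exact pow_le_pow_left₀ (abs_nonneg _) (abs_real_inner_le_norm t v) 2

theorem integral_inner_sq_mul_le (t : E) (hw0 : ∀ a, 0 ≤ w a)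
    (hLw : Integrable (fun a => ‖L a‖ ^ 2 * w a) μ) :
    ∫ a, inner ℝ t (L a) ^ 2 * w a ∂μ ≤ ‖t‖ ^ 2 * ∫ a, ‖L a‖ ^ 2 * w a ∂μ := by
  rw [← integral_const_mul]
  refine integral_mono_of_nonneg (.of_forall fun a => mul_nonneg (sq_nonneg _) (hw0 a))
    (hLw.const_mul _) (.of_forall fun a => ?_)
  dsimp only
  rw [← mul_assoc]
  exact mul_le_mul_of_nonneg_right (real_inner_sq_le_norm_sq_mul_norm_sq t (L a)) (hw0 a)

theorem memLp_two_half_inner_mul_sqrt (t : E) (hL : AEStronglyMeasurable L μ)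
    (hw0 : ∀ a, 0 ≤ w a) (hw : AEStronglyMeasurable w μ)
    (hLw : Integrable (fun a => ‖L a‖ ^ 2 * w a) μ) :
    MemLp (fun a => 1 / 2 * inner ℝ t (L a) * √(w a)) 2 μ := by
  have hmeas : AEStronglyMeasurable (fun a => 1 / 2 * inner ℝ t (L a) * √(w a)) μ :=
    ((aestronglyMeasurable_const.inner hL).const_mul _).mul
      hw.aemeasurable.sqrt.aestronglyMeasurable
  refine (memLp_two_iff_integrable_sq hmeas).2 <|
    (hLw.const_mul (‖t‖ ^ 2)).mono' (hmeas.pow 2) (.of_forall fun a => ?_)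
  rw [Real.norm_of_nonneg (sq_nonneg _), sq_half_inner_mul_sqrt _ _ (hw0 a), ← mul_assoc]
  have := mul_le_mul_of_nonneg_right (real_inner_sq_le_norm_sq_mul_norm_sq t (L a)) (hw0 a)
  linarith [mul_nonneg (sq_nonneg (inner ℝ t (L a))) (hw0 a)]

end Score

theorem stmt_14_general (d m : ℕ)
    (ν : Measure (EuclideanSpace ℝ (Fin m)))
    (p : EuclideanSpace ℝ (Fin d) → EuclideanSpace ℝ (Fin m) → ℝ)
    (x0 : EuclideanSpace ℝ (Fin d))
    (hp0 : ∀ x y, 0 ≤ p x y)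
    (hpdens : ∀ x, ∫ y, p x y ∂ν = 1)
    (L : EuclideanSpace ℝ (Fin m) → EuclideanSpace ℝ (Fin d)) (hL : Measurable L)
    (hL2 : Integrable (fun y => ‖L y‖ ^ 2 * p x0 y) ν)
    (hQMD : (fun t : EuclideanSpace ℝ (Fin d) =>
        ∫ y, (Real.sqrt (p (x0 + t) y) - Real.sqrt (p x0 y) -
          (1 / 2) * (inner ℝ t (L y) : ℝ) * Real.sqrt (p x0 y)) ^ 2 ∂ν)
        =o[nhds 0] fun t => ‖t‖ ^ 2) :
    (fun x : EuclideanSpace ℝ (Fin d) =>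
        (∫ y, (Real.sqrt (p x y) - Real.sqrt (p x0 y)) ^ 2 ∂ν) -
          (1 / 4) * ∫ y, ((inner ℝ (x - x0) (L y) : ℝ)) ^ 2 * p x0 y ∂ν)
      =o[nhds x0] fun x => ‖x - x0‖ ^ 2 := by
  have hp : ∀ x, Integrable (p x) ν := fun x => integrable_of_integral_eq_one (hpdens x)
  have hscore_sq : ∀ t, ∫ y, (1 / 2 * inner ℝ t (L y) * √(p x0 y)) ^ 2 ∂ν =
      1 / 4 * ∫ y, inner ℝ t (L y) ^ 2 * p x0 y ∂ν := fun t => by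
    rw [← integral_const_mul]
    exact integral_congr_ae (.of_forall fun y => sq_half_inner_mul_sqrt _ _ (hp0 x0 y))
  have hscore_bound : (fun t => ∫ y, (1 / 2 * inner ℝ t (L y) * √(p x0 y)) ^ 2 ∂ν)
      =O[nhds 0] fun t : EuclideanSpace ℝ (Fin d) => ‖t‖ ^ 2 := by
    refine .of_bound (1 / 4 * ∫ y, ‖L y‖ ^ 2 * p x0 y ∂ν) (.of_forall fun t => ?_)
    have hnonneg : 0 ≤ ∫ y, inner ℝ t (L y) ^ 2 * p x0 y ∂ν :=
      integral_nonneg fun y => mul_nonneg (sq_nonneg _) (hp0 x0 y)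
    rw [hscore_sq, Real.norm_of_nonneg (by positivity), Real.norm_of_nonneg (by positivity)]
    linarith [integral_inner_sq_mul_le t (hp0 x0) hL2]
  have hexpand := isLittleO_integral_sq_sub_integral_sq
    (fun t => ((hp (x0 + t)).memLp_two_sqrt (hp0 _)).sub ((hp x0).memLp_two_sqrt (hp0 _)))
    (fun t => memLp_two_half_inner_mul_sqrt t hL.aestronglyMeasurable (hp0 x0)
      (hp x0).aestronglyMeasurable hL2) hQMD hscore_bound
  refine (hexpand.comp_tendsto (tendsto_sub_nhds_zero_iff.2 tendsto_id)).congr (fun x => ?_)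
    fun x => rfl
  simp only [Function.comp_apply, id_eq, Pi.sub_apply, add_sub_cancel, hscore_sq]

theorem stmt_14 (d m : ℕ)
    (ν : Measure (EuclideanSpace ℝ (Fin m))) [SigmaFinite ν]
    (p : EuclideanSpace ℝ (Fin d) → EuclideanSpace ℝ (Fin m) → ℝ)
    (x0 : EuclideanSpace ℝ (Fin d))
    (hp0 : ∀ x y, 0 ≤ p x y) (hpmeas : ∀ x, Measurable (p x))
    (hpdens : ∀ x, ∫ y, p x y ∂ν = 1)
    (L : EuclideanSpace ℝ (Fin m) → EuclideanSpace ℝ (Fin d)) (hL : Measurable L)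
    (hL2 : Integrable (fun y => ‖L y‖ ^ 2 * p x0 y) ν)
    (hQMD : (fun t : EuclideanSpace ℝ (Fin d) =>
        ∫ y, (Real.sqrt (p (x0 + t) y) - Real.sqrt (p x0 y) -
          (1 / 2) * (inner ℝ t (L y) : ℝ) * Real.sqrt (p x0 y)) ^ 2 ∂ν)
        =o[nhds 0] fun t => ‖t‖ ^ 2) :
    (fun x : EuclideanSpace ℝ (Fin d) =>
        (∫ y, (Real.sqrt (p x y) - Real.sqrt (p x0 y)) ^ 2 ∂ν) -
          (1 / 4) * ∫ y, ((inner ℝ (x - x0) (L y) : ℝ)) ^ 2 * p x0 y ∂ν)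
      =o[nhds x0] fun x => ‖x - x0‖ ^ 2 :=
  stmt_14_general d m ν p x0 hp0 hpdens L hL hL2 hQMD
end

section
/- Define δ(u) := u/(1 - ln u) for u ∈ (0, e^{-2}) and δ(u) := 0 otherwise. For d ≥ 1, let X be uniform on the ball B_r̃ ⊂ ℝ^d centered at 0, and let Y given X = x take value e_1 with probability 1/2 + δ(‖x‖) and 0 with probability 1/2 − δ(‖x‖). Let P_r be the law of Y given ‖X‖ < r and P the law with P(Y = e_1) = 1/2. Then for all sufficiently small r > 0, TV(P_r, P) ≥ (d(1 − 2^{−d−1})/(d+1)) · r/(1 − ln(r/2)). Consequently, for every ε > 0 and C < ∞ the bound TV(P_r, P) ≤ C r^{1+ε} fails for all small r. -/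
open MeasureTheory

/-- Total variation distance between two measures: supremum over measurable sets of the
absolute difference of the measures. -/
noncomputable def tvDist {α : Type*} [MeasurableSpace α] (P Q : Measure α) : ℝ :=
  sSup {x | ∃ A : Set α, MeasurableSet A ∧ x = |(P A).toReal - (Q A).toReal|}

/-- `δ(u) = u/(1 - ln u)` for `u ∈ (0, e^{-2})`, and `0` otherwise. -/
noncomputable def deltaFn (u : ℝ) : ℝ :=
  if 0 < u ∧ u < Real.exp (-2) then u / (1 - Real.log u) else 0

/-- Probability that `Y = e_1` conditional on `‖X‖ < r`, when `X` is uniform on the ball of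
radius `rt` centered at the origin of `ℝ^d` and `P(Y = e_1 ∣ X = x) = 1/2 + δ(‖x‖)`. -/
noncomputable def piR (d : ℕ) (rt r : ℝ) : ℝ :=
  (∫ x in Metric.ball (0 : EuclideanSpace ℝ (Fin d)) r ∩ Metric.ball 0 rt,
      (1 / 2 + deltaFn ‖x‖)) /
    (volume (Metric.ball (0 : EuclideanSpace ℝ (Fin d)) r ∩ Metric.ball 0 rt)).toReal

/-- The conditional law of `Y` given `‖X‖ < r`: a two-point measure on `{0, e_1} ⊂ ℝ^m`. -/
noncomputable def PrLaw (m d : ℕ) [NeZero m] (rt r : ℝ) :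
    Measure (EuclideanSpace ℝ (Fin m)) :=
  ENNReal.ofReal (piR d rt r) • Measure.dirac (EuclideanSpace.single 0 (1 : ℝ)) +
    ENNReal.ofReal (1 - piR d rt r) • Measure.dirac 0

/-- The law `P` with `P(Y = e_1) = P(Y = 0) = 1/2`. -/
noncomputable def PLaw (m : ℕ) [NeZero m] : Measure (EuclideanSpace ℝ (Fin m)) :=
  (1 / 2 : ENNReal) • Measure.dirac (EuclideanSpace.single 0 (1 : ℝ)) +
    (1 / 2 : ENNReal) • Measure.dirac 0

/-! Taking `A = {e₁}` in the supremum defining `tvDist` bounds the distance below by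
`P_r{e₁} - 1/2`, the mean of `δ(‖x‖)` over `B_r`. In polar coordinates this mean is
`(d / r^d) ∫₀^r v^(d-1) δ(v) dv`, and on `[r/2, r]` the integrand is at least
`v^d / (1 - ln (r/2))`, which yields the constant `d (1 - 2^(-d-1)) / (d + 1)`.
As `r^ε (1 - ln (r/2)) → 0`, this lower bound eventually exceeds `C r^(1+ε)`. -/

open Metric Set Module

section RadialIntegral

variable {E : Type*} [NormedAddCommGroup E] [NormedSpace ℝ E] [FiniteDimensional ℝ E]
  [Nontrivial E] [MeasurableSpace E] [BorelSpace E] (μ : Measure E) [μ.IsAddHaarMeasure]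

theorem setIntegral_ball_fun_norm (f : ℝ → ℝ) (r : ℝ) :
    ∫ x in ball (0 : E) r, f ‖x‖ ∂μ =
      finrank ℝ E * μ.real (ball 0 1) * ∫ y in Ioo 0 r, y ^ (finrank ℝ E - 1) * f y := by
  have hind :
      (ball (0 : E) r).indicator (fun x ↦ f ‖x‖) = fun x ↦ (Iio r).indicator f ‖x‖ := by
    ext x
    by_cases hx : ‖x‖ < r <;> simp [hx]
  have hind' : (fun y : ℝ ↦ y ^ (finrank ℝ E - 1) • (Iio r).indicator f y) =
      (Iio r).indicator (fun y ↦ y ^ (finrank ℝ E - 1) * f y) := by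
    ext y
    by_cases hy : y < r <;> simp [hy]
  rw [← integral_indicator measurableSet_ball, hind, integral_fun_norm_addHaar, hind',
    setIntegral_indicator measurableSet_Iio, Ioi_inter_Iio, nsmul_eq_mul, smul_eq_mul, mul_assoc]

theorem measureReal_ball_zero {r : ℝ} (hr : 0 ≤ r) :
    μ.real (ball (0 : E) r) = r ^ finrank ℝ E * μ.real (ball 0 1) := by
  rw [measureReal_def, μ.addHaar_ball _ hr, ENNReal.toReal_mul,
    ENNReal.toReal_ofReal (by positivity), measureReal_def]

end RadialIntegral

theorem deltaFn_of_pos_of_lt {u : ℝ} (hu : 0 < u) (hu2 : u < Real.exp (-2)) :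
    deltaFn u = u / (1 - Real.log u) :=
  if_pos ⟨hu, hu2⟩

theorem deltaFn_nonneg (u : ℝ) : 0 ≤ deltaFn u := by
  unfold deltaFn
  split_ifs with h
  · exact div_nonneg h.1.le (by linarith [(Real.log_lt_iff_lt_exp h.1).mpr h.2])
  · rfl

theorem deltaFn_le_one (u : ℝ) : deltaFn u ≤ 1 := by
  unfold deltaFn
  split_ifs with h
  · have hu1 : u ≤ 1 := h.2.le.trans (Real.exp_le_one_iff.mpr (by norm_num))
    exact (div_le_self h.1.le (by linarith [(Real.log_lt_iff_lt_exp h.1).mpr h.2])).trans hu1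
  · exact zero_le_one

theorem measurable_deltaFn : Measurable deltaFn :=
  Measurable.ite measurableSet_Ioo (measurable_id.div (measurable_const.sub Real.measurable_log))
    measurable_const

theorem pow_mul_deltaFn_nonneg (n : ℕ) (y : ℝ) : 0 ≤ y ^ n * deltaFn y := by
  by_cases hy : 0 < y
  · exact mul_nonneg (pow_nonneg hy.le n) (deltaFn_nonneg y)
  · simp [deltaFn, hy]

theorem integrableOn_pow_mul_deltaFn (n : ℕ) (r : ℝ) :
    IntegrableOn (fun y ↦ y ^ n * deltaFn y) (Ioo 0 r) := by
  refine Measure.integrableOn_of_bounded (M := |r| ^ n) measure_Ioo_lt_top.ne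
    ((measurable_id.pow_const n).mul measurable_deltaFn).aestronglyMeasurable ?_
  rw [ae_restrict_iff' measurableSet_Ioo]
  filter_upwards with y hy
  rw [norm_mul, norm_pow, Real.norm_of_nonneg (deltaFn_nonneg y), Real.norm_of_nonneg hy.1.le]
  calc y ^ n * deltaFn y ≤ |r| ^ n * 1 :=
        mul_le_mul (pow_le_pow_left₀ hy.1.le (hy.2.le.trans (le_abs_self r)) n) (deltaFn_le_one y)
          (deltaFn_nonneg y) (by positivity)
    _ = |r| ^ n := mul_one _

theorem pow_div_le_pow_mul_deltaFn {n : ℕ} (hn : n ≠ 0) {a y : ℝ} (ha : 0 < a) (hay : a ≤ y)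
    (hy : y < Real.exp (-2)) :
    y ^ n / (1 - Real.log a) ≤ y ^ (n - 1) * deltaFn y := by
  have hy0 : 0 < y := ha.trans_le hay
  rw [deltaFn_of_pos_of_lt hy0 hy, mul_div_assoc', ← pow_succ,
    Nat.sub_add_cancel (Nat.one_le_iff_ne_zero.mpr hn)]
  gcongr
  linarith [(Real.log_lt_iff_lt_exp hy0).mpr hy]

theorem integral_pow_mul_deltaFn_ge {n : ℕ} (hn : n ≠ 0) {r : ℝ} (hr : 0 < r)
    (hr2 : r < Real.exp (-2)) :
    (r ^ (n + 1) - (r / 2) ^ (n + 1)) / ((n + 1) * (1 - Real.log (r / 2))) ≤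
      ∫ y in Ioo 0 r, y ^ (n - 1) * deltaFn y := by
  have hpow : ∫ y in Ioo (r / 2) r, y ^ n = (r ^ (n + 1) - (r / 2) ^ (n + 1)) / (n + 1) := by
    rw [← integral_Ioc_eq_integral_Ioo, ← intervalIntegral.integral_of_le (by linarith),
      integral_pow]
  calc (r ^ (n + 1) - (r / 2) ^ (n + 1)) / ((n + 1) * (1 - Real.log (r / 2)))
      = ∫ y in Ioo (r / 2) r, y ^ n / (1 - Real.log (r / 2)) := by
        rw [integral_div, hpow, div_div]
    _ ≤ ∫ y in Ioo (r / 2) r, y ^ (n - 1) * deltaFn y := by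
        refine setIntegral_mono_on ?_ ((integrableOn_pow_mul_deltaFn _ r).mono_set
          (Ioo_subset_Ioo_left (half_pos hr).le)) measurableSet_Ioo fun y hy ↦
          pow_div_le_pow_mul_deltaFn hn (half_pos hr) hy.1.le (hy.2.trans hr2)
        exact (((continuous_pow n).div_const _).integrableOn_Icc).mono_set Ioo_subset_Icc_self
    _ ≤ ∫ y in Ioo 0 r, y ^ (n - 1) * deltaFn y :=
        setIntegral_mono_set (integrableOn_pow_mul_deltaFn _ r)
          (.of_forall fun y ↦ pow_mul_deltaFn_nonneg _ y)
          (Ioo_subset_Ioo_left (half_pos hr).le).eventuallyLE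

theorem abs_sub_le_tvDist {α : Type*} [MeasurableSpace α] (P Q : Measure α) [IsFiniteMeasure P]
    [IsFiniteMeasure Q] {A : Set α} (hA : MeasurableSet A) :
    |(P A).toReal - (Q A).toReal| ≤ tvDist P Q := by
  refine le_csSup ⟨(P univ).toReal + (Q univ).toReal, ?_⟩ ⟨A, hA, rfl⟩
  rintro x ⟨B, -, rfl⟩
  have hP : (P B).toReal ≤ (P univ).toReal :=
    ENNReal.toReal_mono (measure_ne_top P univ) (measure_mono (subset_univ B))
  have hQ : (Q B).toReal ≤ (Q univ).toReal :=
    ENNReal.toReal_mono (measure_ne_top Q univ) (measure_mono (subset_univ B))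
  rw [abs_sub_le_iff]
  constructor <;> linarith [(P B).toReal_nonneg, (Q B).toReal_nonneg]

section TwoPointLaws

variable (m : ℕ) [NeZero m]

instance isFiniteMeasure_PrLaw (d : ℕ) (rt r : ℝ) : IsFiniteMeasure (PrLaw m d rt r) :=
  ⟨by simp [PrLaw, lt_top_iff_ne_top]⟩

instance isFiniteMeasure_PLaw : IsFiniteMeasure (PLaw m) :=
  ⟨by simp [PLaw, lt_top_iff_ne_top]⟩

theorem PrLaw_singleton_single (d : ℕ) (rt r : ℝ) :
    PrLaw m d rt r {EuclideanSpace.single 0 1} = ENNReal.ofReal (piR d rt r) := by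
  simp [PrLaw]

theorem PLaw_singleton_single : PLaw m {EuclideanSpace.single 0 1} = 1 / 2 := by
  simp [PLaw]

theorem abs_piR_sub_half_le_tvDist (d : ℕ) {rt r : ℝ} (h : 0 ≤ piR d rt r) :
    |piR d rt r - 1 / 2| ≤ tvDist (PrLaw m d rt r) (PLaw m) := by
  have := abs_sub_le_tvDist (PrLaw m d rt r) (PLaw m)
    (measurableSet_singleton (EuclideanSpace.single 0 1))
  rw [PrLaw_singleton_single, PLaw_singleton_single, ENNReal.toReal_ofReal h] at this
  simpa using this

end TwoPointLaws

theorem piR_eq_half_add_integral {d : ℕ} [NeZero d] {rt r : ℝ} (hr : 0 < r) (hrt : r ≤ rt) :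
    piR d rt r = 1 / 2 + d / r ^ d * ∫ y in Ioo 0 r, y ^ (d - 1) * deltaFn y := by
  set B := ball (0 : EuclideanSpace ℝ (Fin d)) r
  have hB : B ∩ ball 0 rt = B := inter_eq_left.mpr (ball_subset_ball hrt)
  have hδ : IntegrableOn (fun x : EuclideanSpace ℝ (Fin d) ↦ deltaFn ‖x‖) B :=
    Measure.integrableOn_of_bounded (M := 1) measure_ball_lt_top.ne
      (measurable_deltaFn.comp measurable_norm).aestronglyMeasurable
      (.of_forall fun x ↦ by rw [Real.norm_of_nonneg (deltaFn_nonneg _)]; exact deltaFn_le_one _)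
  have hV : 0 < volume.real (ball (0 : EuclideanSpace ℝ (Fin d)) 1) :=
    ENNReal.toReal_pos (measure_ball_pos volume _ one_pos).ne' measure_ball_lt_top.ne
  rw [piR, hB, integral_add (integrableOn_const (C := (1 / 2 : ℝ)) measure_ball_lt_top.ne) hδ,
    setIntegral_const, smul_eq_mul, setIntegral_ball_fun_norm, ← measureReal_def,
    measureReal_ball_zero volume hr.le, finrank_euclideanSpace_fin]
  field_simp

theorem tvDist_PrLaw_PLaw_ge (m d : ℕ) [NeZero m] [NeZero d] {rt r : ℝ} (hr : 0 < r)
    (hrt : r ≤ rt) (hr2 : r < Real.exp (-2)) :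
    d * (1 - (2 : ℝ) ^ (-(d : ℝ) - 1)) / (d + 1) * (r / (1 - Real.log (r / 2))) ≤
      tvDist (PrLaw m d rt r) (PLaw m) := by
  have hpi := piR_eq_half_add_integral (d := d) hr hrt
  have hJ : 0 ≤ ∫ y in Ioo 0 r, y ^ (d - 1) * deltaFn y :=
    setIntegral_nonneg measurableSet_Ioo fun y _ ↦ pow_mul_deltaFn_nonneg _ y
  have h2pow : (2 : ℝ) ^ (-(d : ℝ) - 1) = ((2 : ℝ) ^ (d + 1))⁻¹ := by
    rw [show -(d : ℝ) - 1 = -((d + 1 : ℕ) : ℝ) by push_cast; ring, Real.rpow_neg zero_le_two,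
      Real.rpow_natCast]
  calc d * (1 - (2 : ℝ) ^ (-(d : ℝ) - 1)) / (d + 1) * (r / (1 - Real.log (r / 2)))
      = d / r ^ d * ((r ^ (d + 1) - (r / 2) ^ (d + 1)) / ((d + 1) * (1 - Real.log (r / 2)))) := by
        rw [h2pow, div_pow]
        field_simp
        ring
    _ ≤ d / r ^ d * ∫ y in Ioo 0 r, y ^ (d - 1) * deltaFn y := by
        gcongr
        exact integral_pow_mul_deltaFn_ge (NeZero.ne d) hr hr2
    _ = piR d rt r - 1 / 2 := by rw [hpi]; ring
    _ ≤ tvDist (PrLaw m d rt r) (PLaw m) :=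
        (le_abs_self _).trans (abs_piR_sub_half_le_tvDist m d (by rw [hpi]; positivity))

open Filter Topology

theorem tendsto_rpow_mul_one_sub_log_half {ε : ℝ} (hε : 0 < ε) :
    Tendsto (fun r : ℝ ↦ r ^ ε * (1 - Real.log (r / 2))) (𝓝[>] 0) (𝓝 0) := by
  have hpow : Tendsto (fun r : ℝ ↦ r ^ ε) (𝓝[>] 0) (𝓝 0) := by
    simpa [Real.zero_rpow hε.ne'] using
      ((Real.continuousAt_rpow_const 0 ε (Or.inr hε.le)).tendsto).mono_left nhdsWithin_le_nhds
  have hlim := (hpow.const_mul (1 + Real.log 2)).sub (tendsto_log_mul_rpow_nhdsGT_zero hε)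
  rw [mul_zero, sub_zero] at hlim
  refine hlim.congr' (eventually_mem_nhdsWithin.mono fun r (hr : 0 < r) ↦ ?_)
  simp only [Real.log_div hr.ne' two_ne_zero]
  ring

theorem eventually_mul_rpow_lt {K ε : ℝ} (hK : 0 < K) (hε : 0 < ε) (C : ℝ) :
    ∀ᶠ r in 𝓝[>] (0 : ℝ), C * r ^ (1 + ε) < K * (r / (1 - Real.log (r / 2))) := by
  have hsmall : ∀ᶠ r in 𝓝[>] (0 : ℝ), C * (r ^ ε * (1 - Real.log (r / 2))) < K :=
    ((tendsto_rpow_mul_one_sub_log_half hε).const_mul C).eventually_lt_const (by simpa using hK)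
  filter_upwards [hsmall, Ioo_mem_nhdsGT two_pos] with r hlt ⟨hr, hr2⟩
  have hc : 0 < 1 - Real.log (r / 2) := by
    linarith [Real.log_neg (half_pos hr) (by linarith : r / 2 < 1)]
  calc C * r ^ (1 + ε) = C * (r ^ ε * (1 - Real.log (r / 2))) * (r / (1 - Real.log (r / 2))) := by
        rw [Real.rpow_add hr, Real.rpow_one]
        field_simp
    _ < K * (r / (1 - Real.log (r / 2))) := by gcongr

theorem stmt_16 (d m : ℕ) [NeZero d] [NeZero m] (rt : ℝ) (hrt : 0 < rt) :
    (∃ r0 > (0 : ℝ), ∀ r : ℝ, 0 < r → r < r0 →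
        ((d : ℝ) * (1 - (2 : ℝ) ^ (-(d : ℝ) - 1)) / ((d : ℝ) + 1)) *
            (r / (1 - Real.log (r / 2))) ≤
          tvDist (PrLaw m d rt r) (PLaw m)) ∧
      ∀ ε > (0 : ℝ), ∀ C : ℝ,
        ¬ ∃ rbar > (0 : ℝ), ∀ r : ℝ, 0 < r → r < rbar →
            tvDist (PrLaw m d rt r) (PLaw m) ≤ C * r ^ (1 + ε) := by
  have hK : 0 < (d : ℝ) * (1 - (2 : ℝ) ^ (-(d : ℝ) - 1)) / ((d : ℝ) + 1) := by
    have hd : (0 : ℝ) < d := Nat.cast_pos.mpr (Nat.pos_of_ne_zero (NeZero.ne d))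
    have h2 : 0 < 1 - (2 : ℝ) ^ (-(d : ℝ) - 1) :=
      sub_pos.mpr (Real.rpow_lt_one_of_one_lt_of_neg one_lt_two (by linarith))
    positivity
  set r0 := min rt (Real.exp (-2))
  have hr0 : 0 < r0 := lt_min hrt (Real.exp_pos _)
  have hlower : ∀ r : ℝ, 0 < r → r < r0 → _ := fun r hr hr0 ↦
    tvDist_PrLaw_PLaw_ge m d hr (hr0.le.trans (min_le_left _ _)) (hr0.trans_le (min_le_right _ _))
  refine ⟨⟨r0, hr0, hlower⟩, ?_⟩
  rintro ε hε C ⟨rbar, hrbar, hupper⟩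
  obtain ⟨r, hlt, hr, hr_lt⟩ :=
    ((eventually_mul_rpow_lt hK hε C).and (Ioo_mem_nhdsGT (lt_min hr0 hrbar))).exists
  exact (hlt.trans_le (hlower r hr (hr_lt.trans_le (min_le_left _ _)))).not_ge
    (hupper r hr (hr_lt.trans_le (min_le_right _ _)))
end
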